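/- arXiv:2404.19736 — 5 statements merged into one kernel-verified Lean document; each statement's English description precedes it below -/
import Mathlib

section
/- Fix 0 < λ ≤ 1, K ≥ 0, reals 0 < a < b and c < d < 0, and ω > 0. Let ξ : ℝ² → ℂ satisfy |ξ(p) − ξ(q)| ≤ K·|p − q|^λ for all p, q, and ξ(x,y) = 0 whenever (x,y) ∉ [a,b] × [c,d]. Then the function F(t) = ∬_{ℝ²} ξ(e^{−tω} x, y) (x − y)^{-2} dx dy is differentiable at t = 0 with derivative F′(0) = ω ∬_{ℝ²} ξ(x,y) · ((−x − y)/(x − y)) · (x − y)^{-2} dx dy. -/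
/-!
After the substitution `x ↦ e^{tω} x`, the parameter moves from `ξ` into the explicit kernel
`e^s (e^s x - y)⁻²` with `s = tω`. On the quadrant `x > 0 > y`, which contains the support of `ξ`,
this kernel is smooth in `s`, and since `ξ` is continuous with compact support the `s`-derivatives
are dominated by a constant times the indicator of that support. Differentiating under the
integral sign gives `∂ₛ (e^s (e^s x - y)⁻²) = (-x - y)/(x - y) · (x - y)⁻²` at `s = 0`, and the
chain rule contributes the factor `ω`.
-/

open MeasureTheory Set Real Function

theorem continuous_of_norm_sub_le_mul_rpow {X E : Type*} [PseudoMetricSpace X]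
    [SeminormedAddCommGroup E] {f : X → E} {K r : ℝ} (hr : 0 < r)
    (hf : ∀ x y, ‖f x - f y‖ ≤ K * dist x y ^ r) : Continuous f := by
  refine continuous_iff_continuousAt.2 fun x ↦ tendsto_iff_norm_sub_tendsto_zero.2 ?_
  have hbound : Filter.Tendsto (fun y ↦ K * dist y x ^ r) (nhds x) (nhds 0) := by
    refine ((continuous_const.mul ((continuous_id.dist continuous_const).rpow_const
      fun _ ↦ Or.inr hr.le)).tendsto' x 0 ?_)
    simp [hr.ne']
  exact squeeze_zero (fun _ ↦ norm_nonneg _) (fun y ↦ hf y x) hbound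

section CompactSupport

variable {X E : Type*} [TopologicalSpace X] [NormedAddCommGroup E] [NormedSpace ℝ E]
  {ξ : X → E} {V : Set X}

theorem continuous_smul_of_continuousOn_of_tsupport_subset {g : X → ℝ} (hg : ContinuousOn g V)
    (hξ : Continuous ξ) (hV : IsOpen V) (hξV : tsupport ξ ⊆ V) :
    Continuous fun p ↦ g p • ξ p :=
  (hg.smul hξ.continuousOn).continuous_of_tsupport_subset hV
    ((tsupport_smul_subset_right _ _).trans hξV)

theorem exists_norm_smul_le_indicator_tsupport {k : ℝ → X → ℝ} {S : Set ℝ} (hS : IsCompact S)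
    (hξ : Continuous ξ) (hξc : HasCompactSupport ξ) (hξV : tsupport ξ ⊆ V)
    (hk : ContinuousOn (uncurry k) (S ×ˢ V)) :
    ∃ C, ∀ s ∈ S, ∀ p, ‖k s p • ξ p‖ ≤ (tsupport ξ).indicator (fun _ ↦ C) p := by
  have hcont : ContinuousOn (fun q : ℝ × X ↦ k q.1 q.2 • ξ q.2) (S ×ˢ tsupport ξ) :=
    (hk.mono (prod_mono subset_rfl hξV)).smul (hξ.comp continuous_snd).continuousOn
  obtain ⟨C, hC⟩ := (hS.prod hξc).exists_bound_of_continuousOn hcont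
  refine ⟨C, fun s hs p ↦ ?_⟩
  by_cases hp : p ∈ tsupport ξ
  · simpa [indicator_of_mem hp] using hC (s, p) ⟨hs, hp⟩
  · simp [indicator_of_notMem hp, image_eq_zero_of_notMem_tsupport hp]

variable [MeasurableSpace X] [OpensMeasurableSpace X] {μ : Measure X}
  [IsFiniteMeasureOnCompacts μ]

theorem hasDerivAt_integral_smul_of_hasCompactSupport (hξ : Continuous ξ)
    (hξc : HasCompactSupport ξ) (hV : IsOpen V) (hξV : tsupport ξ ⊆ V) {k k' : ℝ → X → ℝ}
    (hk : ∀ s, ContinuousOn (k s) V) (hk' : ContinuousOn (uncurry k') (univ ×ˢ V))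
    (hderiv : ∀ s, ∀ p ∈ V, HasDerivAt (k · p) (k' s p) s) (s₀ : ℝ) :
    HasDerivAt (fun s ↦ ∫ p, k s p • ξ p ∂μ) (∫ p, k' s₀ p • ξ p ∂μ) s₀ := by
  have hcont : ∀ g : X → ℝ, ContinuousOn g V → Continuous fun p ↦ g p • ξ p :=
    fun g hg ↦ continuous_smul_of_continuousOn_of_tsupport_subset hg hξ hV hξV
  have hmeas : ∀ g : X → ℝ, ContinuousOn g V → AEStronglyMeasurable (fun p ↦ g p • ξ p) μ :=
    fun g hg ↦ ((hcont g hg).stronglyMeasurable_of_hasCompactSupport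
      hξc.smul_left).aestronglyMeasurable
  have hk's : ∀ s, ContinuousOn (k' s) V := fun s ↦
    hk'.comp (f := fun p ↦ (s, p)) (continuous_const.prodMk continuous_id).continuousOn
      fun _ hp ↦ ⟨mem_univ s, hp⟩
  obtain ⟨C, hC⟩ := exists_norm_smul_le_indicator_tsupport (isCompact_closedBall s₀ 1)
    hξ hξc hξV (hk'.mono (prod_mono (subset_univ _) subset_rfl))
  refine (hasDerivAt_integral_of_dominated_loc_of_deriv_le (Metric.ball_mem_nhds s₀ one_pos)
    (Filter.Eventually.of_forall fun s ↦ hmeas _ (hk s))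
    ((hcont _ (hk s₀)).integrable_of_hasCompactSupport hξc.smul_left) (hmeas _ (hk's s₀))
    (Filter.Eventually.of_forall fun p s hs ↦ hC s (Metric.ball_subset_closedBall hs) p)
    ((integrableOn_const hξc.measure_lt_top.ne).integrable_indicator
      (isClosed_tsupport ξ).measurableSet)
    (Filter.Eventually.of_forall fun p s _ ↦ ?_)).2
  by_cases hp : ξ p = 0
  · simpa [hp] using hasDerivAt_const s (0 : E)
  · exact (hderiv s p (hξV (subset_tsupport ξ hp))).smul_const (ξ p)

end CompactSupport

theorem integral_comp_mul_fst {Y E : Type*} [MeasurableSpace Y] (ν : Measure Y) [SFinite ν]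
    [NormedAddCommGroup E] [NormedSpace ℝ E] (f : ℝ × Y → E) {c : ℝ} (hc : c ≠ 0) :
    ∫ p, f (c * p.1, p.2) ∂(volume.prod ν) = |c⁻¹| • ∫ p, f p ∂(volume.prod ν) := by
  let e : ℝ × Y ≃ᵐ ℝ × Y :=
    (Homeomorph.mulLeft₀ c hc).toMeasurableEquiv.prodCongr (MeasurableEquiv.refl Y)
  have hmap : Measure.map e (volume.prod ν) = ENNReal.ofReal |c⁻¹| • volume.prod ν := by
    rw [show ⇑e = Prod.map (c * ·) id from rfl,
      ← Measure.map_prod_map _ _ (measurable_const_mul c) measurable_id, Measure.map_id,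
      Real.map_volume_mul_left hc, Measure.prod_smul_left]
  change ∫ p, f (e p) ∂(volume.prod ν) = _
  rw [← integral_map_equiv e, hmap, integral_smul_measure, ENNReal.toReal_ofReal (abs_nonneg _)]

/-- The density, against `dx dy`, of the Liouville measure transported by the simple earthquake
`(x, y) ↦ (e^s x, y)`. -/
noncomputable def earthquakeDensity (s : ℝ) (p : ℝ × ℝ) : ℝ :=
  exp s * ((exp s * p.1 - p.2) ^ 2)⁻¹

noncomputable def earthquakeDensityDeriv (s : ℝ) (p : ℝ × ℝ) : ℝ :=
  exp s * ((-(exp s * p.1) - p.2) / (exp s * p.1 - p.2)) * ((exp s * p.1 - p.2) ^ 2)⁻¹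

theorem exp_mul_fst_sub_snd_pos (s : ℝ) {p : ℝ × ℝ} (hp : p ∈ Ioi 0 ×ˢ Iio 0) :
    0 < exp s * p.1 - p.2 := by
  have : 0 < exp s * p.1 := mul_pos (exp_pos s) hp.1
  linarith [show p.2 < 0 from hp.2]

theorem continuousOn_earthquakeDensity (s : ℝ) :
    ContinuousOn (earthquakeDensity s) (Ioi 0 ×ˢ Iio 0) :=
  continuousOn_const.mul <| (Continuous.continuousOn (by fun_prop)).inv₀
    fun _ hp ↦ (pow_pos (exp_mul_fst_sub_snd_pos s hp) 2).ne'

theorem continuousOn_earthquakeDensityDeriv :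
    ContinuousOn (uncurry earthquakeDensityDeriv) (univ ×ˢ (Ioi 0 ×ˢ Iio 0)) := by
  have hD : Continuous fun q : ℝ × ℝ × ℝ ↦ exp q.1 * q.2.1 - q.2.2 := by fun_prop
  have hne : ∀ q ∈ univ ×ˢ (Ioi 0 ×ˢ Iio 0), exp q.1 * q.2.1 - q.2.2 ≠ 0 :=
    fun q hq ↦ (exp_mul_fst_sub_snd_pos q.1 hq.2).ne'
  exact ((continuous_exp.comp continuous_fst).continuousOn.mul
    ((Continuous.continuousOn (by fun_prop)).div hD.continuousOn hne)).mul
    ((hD.pow 2).continuousOn.inv₀ fun q hq ↦ pow_ne_zero 2 (hne q hq))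

theorem hasDerivAt_earthquakeDensity (s : ℝ) {p : ℝ × ℝ} (hp : p ∈ Ioi 0 ×ˢ Iio 0) :
    HasDerivAt (earthquakeDensity · p) (earthquakeDensityDeriv s p) s := by
  have hpos := exp_mul_fst_sub_snd_pos s hp
  have hD : HasDerivAt (fun u ↦ exp u * p.1 - p.2) (exp s * p.1) s :=
    ((hasDerivAt_exp s).mul_const p.1).sub_const p.2
  refine ((hasDerivAt_exp s).mul ((hD.pow 2).inv (pow_ne_zero 2 hpos.ne'))).congr_deriv ?_
  simp only [earthquakeDensityDeriv, Pi.inv_apply, Pi.pow_apply]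
  field_simp
  ring

theorem integral_liouville_comp_earthquake (ξ : ℝ × ℝ → ℂ) (s : ℝ) :
    ∫ p : ℝ × ℝ, ξ (exp (-s) * p.1, p.2) * ((((p.1 - p.2) ^ 2)⁻¹ : ℝ) : ℂ)
      = ∫ p, earthquakeDensity s p • ξ p := by
  set g : ℝ × ℝ → ℂ := fun q ↦ ξ (exp (-s) * q.1, q.2) * ((((q.1 - q.2) ^ 2)⁻¹ : ℝ) : ℂ)
  have hcov := integral_comp_mul_fst volume g (exp_pos s).ne'
  rw [← Measure.volume_eq_prod, abs_of_pos (inv_pos.2 (exp_pos s)), ← exp_neg] at hcov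
  calc ∫ p, g p = exp s • exp (-s) • ∫ p, g p := by
        rw [smul_smul, ← exp_add, add_neg_cancel, exp_zero, one_smul]
    _ = _ := by
        rw [← hcov, ← integral_smul]
        congr 1 with p
        simp only [g, earthquakeDensity, ← mul_assoc, ← exp_add, neg_add_cancel, exp_zero,
          one_mul, Complex.real_smul]
        push_cast
        ring

theorem liouville_deriv_simple_earthquake_general
    (lam K : ℝ) (hlam0 : 0 < lam)
    (a b c d : ℝ) (ha : 0 < a) (hd : d < 0)
    (ω : ℝ)
    (ξ : ℝ × ℝ → ℂ)
    (hHolder : ∀ p q : ℝ × ℝ, ‖ξ p - ξ q‖ ≤ K * dist p q ^ lam)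
    (hsupp : ∀ x y : ℝ, (x, y) ∉ Set.Icc a b ×ˢ Set.Icc c d → ξ (x, y) = 0) :
    HasDerivAt
      (fun t : ℝ => ∫ p : ℝ × ℝ,
        ξ (Real.exp (-(t * ω)) * p.1, p.2) * ((((p.1 - p.2) ^ 2)⁻¹ : ℝ) : ℂ))
      ((ω : ℂ) * ∫ p : ℝ × ℝ,
        ξ p * (((-p.1 - p.2) / (p.1 - p.2) : ℝ) : ℂ) * ((((p.1 - p.2) ^ 2)⁻¹ : ℝ) : ℂ))
      0 := by
  have hξ : Continuous ξ := continuous_of_norm_sub_le_mul_rpow hlam0 hHolder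
  have hbox : ∀ p ∉ Icc a b ×ˢ Icc c d, ξ p = 0 := fun p hp ↦ hsupp p.1 p.2 hp
  have hξV : tsupport ξ ⊆ Ioi 0 ×ˢ Iio 0 :=
    (closure_minimal (support_subset_iff'.2 hbox) (isClosed_Icc.prod isClosed_Icc)).trans
      (prod_mono (fun _ hx ↦ ha.trans_le hx.1) fun _ hy ↦ hy.2.trans_lt hd)
  have hderiv := (hasDerivAt_integral_smul_of_hasCompactSupport (μ := volume) hξ
    (HasCompactSupport.intro (isCompact_Icc.prod isCompact_Icc) hbox)
    (isOpen_Ioi.prod isOpen_Iio) hξV continuousOn_earthquakeDensity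
    continuousOn_earthquakeDensityDeriv (fun s _ ↦ hasDerivAt_earthquakeDensity s)
    (0 * ω)).scomp 0 (hasDerivAt_mul_const ω)
  simp_rw [integral_liouville_comp_earthquake]
  refine hderiv.congr_deriv ?_
  rw [Complex.real_smul, zero_mul]
  congr 1
  refine integral_congr_ae (.of_forall fun p ↦ ?_)
  simp only [earthquakeDensityDeriv, exp_zero, one_mul, Complex.real_smul]
  push_cast
  ring

/-- Bonahon–Sözen: derivative at `t = 0` of the Liouville measure along a simple
earthquake path, evaluated on a Hölder test function `ξ` supported in a box of
geodesics crossing the earthquake geodesic. -/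
theorem liouville_deriv_simple_earthquake
    (lam K : ℝ) (hlam0 : 0 < lam) (hlam1 : lam ≤ 1) (hK : 0 ≤ K)
    (a b c d : ℝ) (ha : 0 < a) (hab : a < b) (hcd : c < d) (hd : d < 0)
    (ω : ℝ) (hω : 0 < ω)
    (ξ : ℝ × ℝ → ℂ)
    (hHolder : ∀ p q : ℝ × ℝ, ‖ξ p - ξ q‖ ≤ K * dist p q ^ lam)
    (hsupp : ∀ x y : ℝ, (x, y) ∉ Set.Icc a b ×ˢ Set.Icc c d → ξ (x, y) = 0) :
    HasDerivAt
      (fun t : ℝ => ∫ p : ℝ × ℝ,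
        ξ (Real.exp (-(t * ω)) * p.1, p.2) * ((((p.1 - p.2) ^ 2)⁻¹ : ℝ) : ℂ))
      ((ω : ℂ) * ∫ p : ℝ × ℝ,
        ξ p * (((-p.1 - p.2) / (p.1 - p.2) : ℝ) : ℂ) * ((((p.1 - p.2) ^ 2)⁻¹ : ℝ) : ℂ))
      0 :=
  liouville_deriv_simple_earthquake_general lam K hlam0 a b c d ha hd ω ξ hHolder hsupp
end

section
/- Fix 0 < λ ≤ 1, K ≥ 0, reals 0 < a < b and c < d < 0, and ω > 0. Let ξ : ℝ² → ℂ satisfy |ξ(p) − ξ(q)| ≤ K·|p − q|^λ for all p, q, and ξ(x,y) = 0 whenever (x,y) ∉ [a,b] × [c,d]. Then for every t ∈ ℝ the function F(t) = ∬_{ℝ²} ξ(e^{−tω} x, y) (x − y)^{-2} dx dy is differentiable at t with derivative F′(t) = ω ∬_{ℝ²} ξ(x,y) · e^{tω} (−x e^{tω} − y) / (x e^{tω} − y)^{3} dx dy. -/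
/-!
Substituting `x ↦ e^{tω} x` turns the integral into `∬ ξ(x,y) e^{tω} (e^{tω} x - y)⁻²`, which moves
the time dependence into a kernel that is smooth in `t` on the quadrant `x > 0 > y`. Hölder
continuity makes `ξ` continuous, and its support is a compact subset of that quadrant, so the
`t`-derivative of the kernel is bounded there locally uniformly in `t`, and differentiation under
the integral sign applies.
-/

open MeasureTheory Real Filter Topology Set

theorem continuous_of_norm_sub_le_mul_dist_rpow {X E : Type*} [PseudoMetricSpace X]
    [SeminormedAddCommGroup E] {K lam : ℝ} (hlam : 0 < lam) {f : X → E}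
    (hf : ∀ p q, ‖f p - f q‖ ≤ K * dist p q ^ lam) : Continuous f := by
  refine continuous_iff_continuousAt.2 fun p => ?_
  rw [ContinuousAt, tendsto_iff_norm_sub_tendsto_zero]
  have hlim : Tendsto (fun q => K * dist q p ^ lam) (𝓝 p) (𝓝 0) := by
    have := (((continuous_id.dist (continuous_const (y := p))).rpow_const
      fun _ => Or.inr hlam.le).const_mul K).tendsto p
    simpa [Real.zero_rpow hlam.ne'] using this
  exact squeeze_zero (fun _ => norm_nonneg _) (fun q => hf q p) hlim

theorem integral_comp_mul_left_fst {E : Type*} [NormedAddCommGroup E] [NormedSpace ℝ E]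
    (g : ℝ × ℝ → E) {a : ℝ} (ha : a ≠ 0) :
    ∫ p : ℝ × ℝ, g (a * p.1, p.2) = |a⁻¹| • ∫ p, g p := by
  let L : ℝ × ℝ ≃ₜ ℝ × ℝ := (Homeomorph.mulLeft₀ a ha).prodCongr (Homeomorph.refl ℝ)
  have hmap : Measure.map L volume = ENNReal.ofReal |a⁻¹| • (volume : Measure (ℝ × ℝ)) := by
    have := Measure.map_prod_map (volume : Measure ℝ) (volume : Measure ℝ)
      (measurable_const_mul a) measurable_id
    rw [Real.map_volume_mul_left ha, Measure.map_id, Measure.prod_smul_left,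
      ← Measure.volume_eq_prod] at this
    exact this.symm
  calc ∫ p : ℝ × ℝ, g (a * p.1, p.2) = ∫ p, g p ∂(Measure.map L volume) :=
        (integral_map_equiv L.toMeasurableEquiv g).symm
    _ = _ := by rw [hmap, integral_smul_measure, ENNReal.toReal_ofReal (abs_nonneg _)]

theorem norm_mul_ofReal_le_of_tsupport {X : Type*} [TopologicalSpace X] {ξ : X → ℂ}
    {g : X → ℝ} {C : ℝ} (hg : ∀ x ∈ tsupport ξ, ‖g x‖ ≤ C) (x : X) :
    ‖ξ x * g x‖ ≤ C * ‖ξ x‖ := by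
  by_cases hx : x ∈ tsupport ξ
  · rw [norm_mul, Complex.norm_real, mul_comm]
    exact mul_le_mul_of_nonneg_right (hg x hx) (norm_nonneg _)
  · simp [image_eq_zero_of_notMem_tsupport hx]

theorem hasDerivAt_integral_mul_of_hasCompactSupport
    {X : Type*} [TopologicalSpace X] [MeasurableSpace X] [OpensMeasurableSpace X]
    {μ : Measure X} [IsFiniteMeasureOnCompacts μ]
    {ξ : X → ℂ} (hξ : Continuous ξ) (hξc : HasCompactSupport ξ)
    {φ φ' : ℝ → X → ℝ} {t : ℝ}
    (hφ_meas : ∀ s, Measurable (φ s)) (hφ'_meas : Measurable (φ' t))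
    (hφ_cont : ContinuousOn (φ t) (tsupport ξ))
    (hφ'_cont : ContinuousOn (Function.uncurry φ') (univ ×ˢ tsupport ξ))
    (hφ' : ∀ s, ∀ x ∈ tsupport ξ, HasDerivAt (φ · x) (φ' s x) s) :
    HasDerivAt (fun s => ∫ x, ξ x * φ s x ∂μ) (∫ x, ξ x * φ' t x ∂μ) t := by
  have hξi : Integrable (fun x => ‖ξ x‖) μ := (hξ.integrable_of_hasCompactSupport hξc).norm
  obtain ⟨C, hC⟩ := hξc.isCompact.exists_bound_of_continuousOn hφ_cont
  obtain ⟨C', hC'⟩ := ((isCompact_closedBall t 1).prod hξc.isCompact).exists_bound_of_continuousOn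
    (hφ'_cont.mono (prod_mono (subset_univ _) le_rfl))
  have hmeas : ∀ {g : X → ℝ}, Measurable g → AEStronglyMeasurable (fun x => ξ x * g x) μ :=
    fun hg => (hξ.measurable.mul (Complex.measurable_ofReal.comp hg)).aestronglyMeasurable
  refine (hasDerivAt_integral_of_dominated_loc_of_deriv_le (F' := fun s x => ξ x * φ' s x)
    (Metric.ball_mem_nhds t one_pos)
    (.of_forall fun s => hmeas (hφ_meas s))
    ((hξi.const_mul C).mono' (hmeas (hφ_meas t))
      (.of_forall (norm_mul_ofReal_le_of_tsupport hC)))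
    (hmeas hφ'_meas) (.of_forall fun x s hs => ?_) (hξi.const_mul C')
    (.of_forall fun x s _ => ?_)).2
  · exact norm_mul_ofReal_le_of_tsupport
      (fun y hy => hC' (s, y) ⟨Metric.ball_subset_closedBall hs, hy⟩) x
  · by_cases hx : x ∈ tsupport ξ
    · exact ((hφ' s x hx).ofReal_comp).const_mul (ξ x)
    · simpa [image_eq_zero_of_notMem_tsupport hx] using hasDerivAt_const s (0 : ℂ)

theorem hasDerivAt_exp_mul_inv_sq_sub {ω x y : ℝ} (s : ℝ) (h : x * exp (s * ω) - y ≠ 0) :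
    HasDerivAt (fun u => exp (u * ω) * ((exp (u * ω) * x - y) ^ 2)⁻¹)
      (ω * (exp (s * ω) * (-x * exp (s * ω) - y) / (x * exp (s * ω) - y) ^ 3)) s := by
  have hexp : HasDerivAt (fun u => exp (u * ω)) (exp (s * ω) * ω) s := by
    simpa using ((hasDerivAt_id s).mul_const ω).exp
  have hden : HasDerivAt (fun u => (exp (u * ω) * x - y) ^ 2)
      (2 * (exp (s * ω) * x - y) ^ 1 * (exp (s * ω) * ω * x)) s :=
    ((hexp.mul_const x).sub_const y).pow 2
  refine (hexp.mul (hden.inv (pow_ne_zero 2 (by rwa [mul_comm])))).congr_deriv ?_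
  simp only [Pi.inv_apply]
  field_simp
  ring

theorem integral_comp_exp_neg_mul_fst_mul_inv_sq_sub (ξ : ℝ × ℝ → ℂ) (r : ℝ) :
    ∫ p : ℝ × ℝ, ξ (exp (-r) * p.1, p.2) * ((((p.1 - p.2) ^ 2)⁻¹ : ℝ) : ℂ)
      = ∫ p : ℝ × ℝ, ξ p * ((exp r * ((exp r * p.1 - p.2) ^ 2)⁻¹ : ℝ) : ℂ) := by
  have h := integral_comp_mul_left_fst
    (fun q : ℝ × ℝ => ξ q * ((((exp r * q.1 - q.2) ^ 2)⁻¹ : ℝ) : ℂ)) (exp_pos (-r)).ne'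
  simp only [exp_neg, mul_inv_cancel_left₀ (exp_pos r).ne', inv_inv, abs_of_pos (exp_pos r)] at h
  rw [exp_neg, h, ← integral_smul]
  congr 1 with p
  rw [Complex.real_smul]
  push_cast
  ring

theorem mul_exp_sub_pos {x y : ℝ} (hx : 0 < x) (hy : y < 0) (r : ℝ) : 0 < x * exp r - y := by
  have := mul_pos hx (exp_pos r)
  linarith

theorem liouville_deriv_simple_earthquake_all_t_general
    (lam K : ℝ) (hlam0 : 0 < lam)
    (a b c d : ℝ) (ha : 0 < a) (hd : d < 0)
    (ω : ℝ)
    (ξ : ℝ × ℝ → ℂ)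
    (hHolder : ∀ p q : ℝ × ℝ, ‖ξ p - ξ q‖ ≤ K * dist p q ^ lam)
    (hsupp : ∀ x y : ℝ, (x, y) ∉ Set.Icc a b ×ˢ Set.Icc c d → ξ (x, y) = 0)
    (t : ℝ) :
    HasDerivAt
      (fun t : ℝ => ∫ p : ℝ × ℝ,
        ξ (Real.exp (-(t * ω)) * p.1, p.2) * ((((p.1 - p.2) ^ 2)⁻¹ : ℝ) : ℂ))
      ((ω : ℂ) * ∫ p : ℝ × ℝ,
        ξ p * ((Real.exp (t * ω) * (-p.1 * Real.exp (t * ω) - p.2)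
          / (p.1 * Real.exp (t * ω) - p.2) ^ 3 : ℝ) : ℂ))
      t := by
  have hξ : Continuous ξ := continuous_of_norm_sub_le_mul_dist_rpow hlam0 hHolder
  have hbox : tsupport ξ ⊆ Icc a b ×ˢ Icc c d :=
    closure_minimal (fun p hp => by_contra fun h => hp (hsupp p.1 p.2 h))
      (isClosed_Icc.prod isClosed_Icc)
  have hξc : HasCompactSupport ξ :=
    (isCompact_Icc.prod isCompact_Icc).of_isClosed_subset (isClosed_tsupport ξ) hbox
  have hquad : tsupport ξ ⊆ Ioi 0 ×ˢ Iio 0 :=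
    hbox.trans (prod_mono (fun x hx => ha.trans_le hx.1) fun y hy => hy.2.trans_lt hd)
  simp_rw [integral_comp_exp_neg_mul_fst_mul_inv_sq_sub]
  rw [← integral_const_mul]
  refine (hasDerivAt_integral_mul_of_hasCompactSupport (φ' := fun s p =>
      ω * (exp (s * ω) * (-p.1 * exp (s * ω) - p.2) / (p.1 * exp (s * ω) - p.2) ^ 3))
    hξ hξc (by fun_prop) (by fun_prop) ?_ ?_ fun s p hp => hasDerivAt_exp_mul_inv_sq_sub s
      (mul_exp_sub_pos (hquad hp).1 (hquad hp).2 _).ne').congr_deriv ?_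
  · refine (continuousOn_const.mul (ContinuousOn.inv₀ (by fun_prop) fun p hp => ?_)).mono hquad
    rw [mul_comm]
    exact pow_ne_zero 2 (mul_exp_sub_pos hp.1 hp.2 _).ne'
  · refine (continuousOn_const.mul (ContinuousOn.div (by fun_prop) (by fun_prop)
      fun q hq => pow_ne_zero 3 (mul_exp_sub_pos hq.2.1 hq.2.2 _).ne')).mono
      (prod_mono subset_rfl hquad)
  · congr 1 with p
    push_cast
    ring

/-- Derivative at any real time `t` of the Liouville measure along a simple
earthquake path, evaluated on a Hölder test function `ξ` supported in a box of
geodesics crossing the earthquake geodesic. -/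
theorem liouville_deriv_simple_earthquake_all_t
    (lam K : ℝ) (hlam0 : 0 < lam) (hlam1 : lam ≤ 1) (hK : 0 ≤ K)
    (a b c d : ℝ) (ha : 0 < a) (hab : a < b) (hcd : c < d) (hd : d < 0)
    (ω : ℝ) (hω : 0 < ω)
    (ξ : ℝ × ℝ → ℂ)
    (hHolder : ∀ p q : ℝ × ℝ, ‖ξ p - ξ q‖ ≤ K * dist p q ^ lam)
    (hsupp : ∀ x y : ℝ, (x, y) ∉ Set.Icc a b ×ˢ Set.Icc c d → ξ (x, y) = 0)
    (t : ℝ) :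
    HasDerivAt
      (fun t : ℝ => ∫ p : ℝ × ℝ,
        ξ (Real.exp (-(t * ω)) * p.1, p.2) * ((((p.1 - p.2) ^ 2)⁻¹ : ℝ) : ℂ))
      ((ω : ℂ) * ∫ p : ℝ × ℝ,
        ξ p * ((Real.exp (t * ω) * (-p.1 * Real.exp (t * ω) - p.2)
          / (p.1 * Real.exp (t * ω) - p.2) ^ 3 : ℝ) : ℂ))
      t :=
  liouville_deriv_simple_earthquake_all_t_general lam K hlam0 a b c d ha hd ω ξ hHolder hsupp t
end

section
/- Let R ≥ 1 and let s, t ∈ [−R, R] with s < t. Let i denote the point i of the upper half-plane ℍ (with its hyperbolic metric) and let q ∈ ℍ be the point with real part (s + t)/2 and imaginary part (t − s)/2. Then exp( − dist_ℍ(i, q) ) ≥ ( e^{−R} / (2R²) ) · (t − s). -/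
open UpperHalfPlane

open scoped UpperHalfPlane

/-- Bonahon–Sözen distance estimate: if `q` is the apex of the geodesic
semicircle with ideal endpoints `s < t` in `[−R, R]`, then
`e^{−dist(i, q)} ≥ (e^{−R}/(2R²)) (t − s)`. -/
theorem exp_neg_dist_apex_ge (R : ℝ) (hR : 1 ≤ R) (s t : ℝ)
    (hs : s ∈ Set.Icc (-R) R) (ht : t ∈ Set.Icc (-R) R) (hst : s < t)
    (q : ℍ) (hre : (q : ℂ).re = (s + t) / 2) (him : (q : ℂ).im = (t - s) / 2) :
    Real.exp (-(dist UpperHalfPlane.I q)) ≥ Real.exp (-R) / (2 * R ^ 2) * (t - s) := by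
  obtain ⟨hs1, hs2⟩ := hs
  obtain ⟨ht1, ht2⟩ := ht
  set d := dist UpperHalfPlane.I q with hd
  have hb : (0:ℝ) < (t - s) / 2 := by linarith
  have hqim : q.im = (t - s) / 2 := him
  have hIim : (UpperHalfPlane.I : ℍ).im = 1 := rfl
  have hIre : ((UpperHalfPlane.I : ℍ) : ℂ).re = 0 := rfl
  have hIim' : ((UpperHalfPlane.I : ℍ) : ℂ).im = 1 := rfl
  have hcosh : Real.cosh d = 1 + (((s + t) / 2) ^ 2 + (1 - (t - s) / 2) ^ 2)
      / (2 * 1 * ((t - s) / 2)) := by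
    rw [hd, UpperHalfPlane.cosh_dist, hIim, hqim, Complex.dist_eq, Complex.sq_norm,
      Complex.normSq_apply, Complex.sub_re, Complex.sub_im, hre, him, hIre, hIim']
    ring_nf
  have hRpos : (0:ℝ) < R := by linarith
  have hcosh_le : Real.cosh d ≤ R ^ 2 / ((t - s) / 2) := by
    rw [hcosh, le_div_iff₀ hb]
    have hne : (t - s) ≠ 0 := by linarith
    have heq : (1 + (((s + t) / 2) ^ 2 + (1 - (t - s) / 2) ^ 2) / (2 * 1 * ((t - s) / 2)))
        * ((t - s) / 2)
        = (t - s) / 2 + (((s + t) / 2) ^ 2 + (1 - (t - s) / 2) ^ 2) / 2 := by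
      field_simp
    rw [heq]
    nlinarith [sq_nonneg (s + t), sq_nonneg (t - s)]
  have hexp_le : Real.exp d ≤ 2 * R ^ 2 / ((t - s) / 2) := by
    have h1 : Real.sinh d < Real.cosh d := Real.sinh_lt_cosh d
    have h2 := Real.cosh_add_sinh d
    have : Real.exp d ≤ 2 * Real.cosh d := by linarith
    calc Real.exp d ≤ 2 * Real.cosh d := this
      _ ≤ 2 * (R ^ 2 / ((t - s) / 2)) := by linarith
      _ = 2 * R ^ 2 / ((t - s) / 2) := by ring
  have hE : Real.exp d * ((t - s) / 2) ≤ 2 * R ^ 2 := (le_div_iff₀ hb).mp hexp_le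
  have hEc : Real.exp (-R) ≤ 1 / 2 := by
    have h2 : (2:ℝ) ≤ Real.exp R := by
      have := Real.exp_one_gt_d9
      have hle := Real.exp_le_exp.mpr hR
      linarith
    rw [Real.exp_neg, inv_le_comm₀ (Real.exp_pos R) (by norm_num)]
    linarith [Real.exp_pos R]
  have hexpd_pos : (0:ℝ) < Real.exp d := Real.exp_pos d
  rw [ge_iff_le, show Real.exp (-d) = 1 / Real.exp d by rw [Real.exp_neg, inv_eq_one_div],
    le_div_iff₀ hexpd_pos]
  have hc : (0:ℝ) ≤ Real.exp (-R) / (2 * R ^ 2) := by positivity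
  calc Real.exp (-R) / (2 * R ^ 2) * (t - s) * Real.exp d
      = Real.exp (-R) / (2 * R ^ 2) * (2 * (Real.exp d * ((t - s) / 2))) := by ring
    _ ≤ Real.exp (-R) / (2 * R ^ 2) * (2 * (2 * R ^ 2)) := by gcongr
    _ = 2 * Real.exp (-R) := by field_simp
    _ ≤ 1 := by linarith
end

section
/- Let μ be a Borel measure on G = { (u,v) ∈ ℝ² : u < v } and let M > 0 be such that for every point z of the upper half-plane ℍ, μ( { (u,v) ∈ G : infDist(z, γ(u,v)) ≤ 1 } ) ≤ M, where γ(u,v) = { w ∈ ℍ : |w − (u+v)/2| = (v−u)/2 } and infDist is taken with respect to the hyperbolic metric of ℍ. Then for every λ > 0, the integral ∫_G exp( −(1 + λ) · infDist(i, γ(u,v)) ) dμ(u,v) is finite. -/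
open MeasureTheory UpperHalfPlane

open scoped UpperHalfPlane ENNReal

/-- The hyperbolic geodesic of the upper half-plane with ideal endpoints `u`
and `v`: the Euclidean semicircle over the segment from `u` to `v`. -/
def geodesicSet (u v : ℝ) : Set ℍ :=
  {z : ℍ | ‖(z : ℂ) - (((u + v) / 2 : ℝ) : ℂ)‖ = |u - v| / 2}

/-!
Cover `ℍ` by the `1/2`-net of points `k e^{m/4} / 4 + i e^{m/4}` (`m k : ℤ`). If a geodesic `g`
is at distance `d` from `i`, a net point `p` near the point of `g` closest to `i` lies within
distance `1` of `g` and within `d + 1` of `i`. Hence the integrand is bounded by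
`∑_p e^{1+λ} e^{-(1+λ) d(i,p)} 1_{S_p}(g)`, where `S_p` is the set of geodesics passing within `1`
of `p`, of measure at most `M`. It remains to see that `∑_p e^{-(1+λ) d(i,p)} < ∞`: each row `m`
of the net contributes a bounded amount to `∑_p e^{-d(i,p)}` (from
`cosh d(i,z) = (|z|² + 1) / (2 Im z)` and a telescoping sum), while `e^{-λ d(i,p)} ≤ e^{-λ|m|/4}`
decays geometrically in `m`.
-/

open Real Set Metric

theorem setLIntegral_le_tsum_mul_of_forall_exists {α ι : Type*} [MeasurableSpace α]
    [Countable ι] {μ : Measure α} {s : Set α} {f : α → ℝ≥0∞} {S : ι → Set α}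
    {w : ι → ℝ≥0∞} {C : ℝ≥0∞} (hS : ∀ i, μ (S i) ≤ C)
    (hf : ∀ x ∈ s, ∃ i, x ∈ S i ∧ f x ≤ w i) :
    ∫⁻ x in s, f x ∂μ ≤ (∑' i, w i) * C := by
  set F : ι → α → ℝ≥0∞ := fun i => (toMeasurable μ (S i)).indicator fun _ => w i
  have hF : ∀ i, Measurable (F i) := fun i =>
    measurable_const.indicator (measurableSet_toMeasurable μ _)
  calc ∫⁻ x in s, f x ∂μ ≤ ∫⁻ x in s, ∑' i, F i x ∂μ := by
        refine setLIntegral_mono (Measurable.tsum hF) fun x hx => ?_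
        obtain ⟨i, hi, hfi⟩ := hf x hx
        calc f x ≤ F i x := hfi.trans_eq
              (indicator_of_mem (subset_toMeasurable μ _ hi) fun _ => w i).symm
          _ ≤ ∑' i, F i x := ENNReal.le_tsum i
    _ = ∑' i, ∫⁻ x in s, F i x ∂μ := lintegral_tsum fun i => (hF i).aemeasurable
    _ ≤ ∑' i, w i * C := by
        refine ENNReal.tsum_le_tsum fun i => (lintegral_indicator_const_le _ _).trans ?_
        grw [Measure.restrict_apply_le, measure_toMeasurable, hS]
    _ = (∑' i, w i) * C := ENNReal.tsum_mul_right

theorem ENNReal.tsum_int_comp_natAbs_le (g : ℕ → ℝ≥0∞) :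
    ∑' k : ℤ, g k.natAbs ≤ 2 * ∑' n, g n := by
  calc ∑' k : ℤ, g k.natAbs ≤ ∑' k : ℤ, g k.natAbs + g (0 : ℤ).natAbs := le_self_add
    _ = ∑' n : ℕ, (g n + g n) := by
        simpa using (tsum_nat_add_neg (f := fun k : ℤ => g k.natAbs) ENNReal.summable).symm
    _ = 2 * ∑' n, g n := by rw [ENNReal.tsum_add, two_mul]

theorem tsum_ofReal_inv_add_one_mul_sq_add_sq_le {a b : ℝ} (ha : 0 < a) (hb : 0 < b) :
    ∑' n : ℕ, ENNReal.ofReal (((n + 1) * a) ^ 2 + b ^ 2)⁻¹ ≤ ENNReal.ofReal (2 / (a * b)) := by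
  set F : ℕ → ℝ := fun n => 2 / a * (n * a + b)⁻¹
  -- telescoping, since `(n a + b)((n + 1) a + b) ≤ ((n + 1) a + b)² ≤ 2 (((n + 1) a)² + b²)`
  have hstep (n : ℕ) : (((n + 1) * a) ^ 2 + b ^ 2)⁻¹ ≤ F n - F (n + 1) := by
    have h₁ : 0 < n * a + b := by positivity
    have h₂ : n * a + b ≤ (n + 1) * a + b := by nlinarith
    have : F n - F (n + 1) = 2 / ((n * a + b) * ((n + 1) * a + b)) := by
      simp only [F]; push_cast; field_simp; ring
    rw [this, inv_eq_one_div, div_le_div_iff₀ (by positivity) (by positivity)]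
    nlinarith [sq_nonneg ((n + 1) * a - b),
      mul_le_mul_of_nonneg_right h₂ (by positivity : (0 : ℝ) ≤ (n + 1) * a + b)]
  refine ENNReal.tsum_le_of_sum_range_le fun N => ?_
  rw [← ENNReal.ofReal_sum_of_nonneg fun n _ => by positivity]
  refine ENNReal.ofReal_le_ofReal ?_
  calc ∑ n ∈ Finset.range N, (((n + 1) * a) ^ 2 + b ^ 2)⁻¹
      ≤ ∑ n ∈ Finset.range N, (F n - F (n + 1)) := Finset.sum_le_sum fun n _ => hstep n
    _ = F 0 - F N := Finset.sum_range_sub' F N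
    _ ≤ F 0 := sub_le_self _ (by positivity)
    _ = 2 / (a * b) := by simp only [F, CharP.cast_eq_zero, zero_mul, zero_add]; ring

theorem tsum_int_ofReal_inv_mul_sq_add_sq_le {a b : ℝ} (ha : 0 < a) (hb : 0 < b) :
    ∑' k : ℤ, ENNReal.ofReal (((k * a) ^ 2 + b ^ 2)⁻¹) ≤
      2 * ENNReal.ofReal ((b ^ 2)⁻¹ + 2 / (a * b)) := by
  set g : ℕ → ℝ≥0∞ := fun n => ENNReal.ofReal (((n * a) ^ 2 + b ^ 2)⁻¹)
  have hg (k : ℤ) : ENNReal.ofReal (((k * a) ^ 2 + b ^ 2)⁻¹) = g k.natAbs := by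
    simp only [g, Nat.cast_natAbs, mul_pow, sq_abs, Int.cast_abs]
  calc ∑' k : ℤ, ENNReal.ofReal (((k * a) ^ 2 + b ^ 2)⁻¹) = ∑' k : ℤ, g k.natAbs :=
        tsum_congr hg
    _ ≤ 2 * ∑' n, g n := ENNReal.tsum_int_comp_natAbs_le g
    _ = 2 * (g 0 + ∑' n : ℕ, g (n + 1)) := by rw [tsum_eq_zero_add' ENNReal.summable]
    _ ≤ 2 * (ENNReal.ofReal (b ^ 2)⁻¹ + ENNReal.ofReal (2 / (a * b))) := by
        gcongr
        · simp [g]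
        · simpa [g] using tsum_ofReal_inv_add_one_mul_sq_add_sq_le ha hb
    _ = 2 * ENNReal.ofReal ((b ^ 2)⁻¹ + 2 / (a * b)) := by
        rw [ENNReal.ofReal_add (by positivity) (by positivity)]

noncomputable def netPoint (m k : ℤ) : ℍ :=
  ⟨⟨k * exp (m / 4) / 4, exp (m / 4)⟩, exp_pos _⟩

@[simp]
theorem netPoint_re (m k : ℤ) : (netPoint m k).re = k * exp (m / 4) / 4 := rfl

@[simp]
theorem netPoint_im (m k : ℤ) : (netPoint m k).im = exp (m / 4) := rfl

theorem exp_one_div_four_le : exp (1 / 4) ≤ 4 / 3 := by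
  have h := add_one_le_exp (-(1 / 4))
  rw [exp_neg] at h
  have := exp_pos (1 / 4)
  rw [le_inv_comm₀ (by norm_num) this] at h
  linarith

theorem exists_dist_netPoint_le (w : ℍ) : ∃ m k : ℤ, dist (netPoint m k) w ≤ 1 / 2 := by
  set m : ℤ := ⌊4 * log w.im⌋
  set y := exp (m / 4)
  set k : ℤ := round (4 * w.re / y)
  have hy : 0 < y := exp_pos _
  have hy_le : y ≤ w.im := by
    rw [← exp_log w.im_pos]
    exact exp_le_exp.2 (by linarith [Int.floor_le (4 * log w.im)])
  have hle_y : w.im ≤ 4 / 3 * y := by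
    calc w.im = exp (log w.im) := (exp_log w.im_pos).symm
      _ ≤ exp (1 / 4 + m / 4) := exp_le_exp.2 (by linarith [Int.lt_floor_add_one (4 * log w.im)])
      _ ≤ 4 / 3 * y := by rw [exp_add]; gcongr; exact exp_one_div_four_le
  have hre : |k * y / 4 - w.re| ≤ y / 8 := by
    have h := abs_sub_round (4 * w.re / y)
    rw [abs_sub_comm] at h
    calc |k * y / 4 - w.re| = |(k - 4 * w.re / y) * (y / 4)| := by congr 1; field_simp
      _ = |k - 4 * w.re / y| * (y / 4) := by rw [abs_mul, abs_of_pos (by positivity : 0 < y / 4)]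
      _ ≤ 1 / 2 * (y / 4) := by gcongr
      _ = y / 8 := by ring
  have him : |y - w.im| ≤ y / 3 := by
    rw [abs_sub_comm, abs_of_nonneg (by linarith)]; linarith
  refine ⟨m, k, (dist_le_dist_coe_div_sqrt _ _).trans ?_⟩
  have hsqrt : y ≤ √((netPoint m k).im * w.im) :=
    le_sqrt_of_sq_le (by rw [netPoint_im, sq]; gcongr)
  have hdist : dist (netPoint m k : ℂ) w ≤ y / 2 := by
    rw [Complex.dist_eq]
    refine (Complex.norm_le_abs_re_add_abs_im _).trans ?_
    simp only [Complex.sub_re, Complex.sub_im, coe_re, coe_im, netPoint_re, netPoint_im]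
    linarith
  rw [div_le_iff₀ (hy.trans_le hsqrt)]
  linarith

theorem exists_netPoint_infDist_le_one (z : ℍ) {A : Set ℍ} (hA : A.Nonempty) :
    ∃ p : ℤ × ℤ,
      infDist (netPoint p.1 p.2) A ≤ 1 ∧ dist z (netPoint p.1 p.2) ≤ infDist z A + 1 := by
  obtain ⟨w, hwA, hzw⟩ := (infDist_lt_iff hA).1 (lt_add_of_pos_right (infDist z A) one_half_pos)
  obtain ⟨m, k, hw⟩ := exists_dist_netPoint_le w
  refine ⟨(m, k), (infDist_le_dist_of_mem hwA).trans (by linarith), ?_⟩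
  linarith [dist_triangle z w (netPoint m k), dist_comm w (netPoint m k)]

theorem exp_neg_dist_I_le (z : ℍ) : exp (-dist I z) ≤ 2 * z.im / (z.re ^ 2 + z.im ^ 2 + 1) := by
  have hcosh : cosh (dist I z) ≤ exp (dist I z) := by
    rw [← cosh_add_sinh, le_add_iff_nonneg_right, sinh_nonneg_iff]
    exact dist_nonneg
  calc exp (-dist I z) = (exp (dist I z))⁻¹ := exp_neg _
    _ ≤ (cosh (dist I z))⁻¹ := inv_anti₀ (cosh_pos _) hcosh
    _ = 2 * z.im / (z.re ^ 2 + z.im ^ 2 + 1) := by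
        rw [cosh_dist', inv_div]; simp; ring

theorem abs_log_im_le_dist_I (z : ℍ) : |log z.im| ≤ dist I z := by
  simpa [Real.dist_eq, abs_sub_comm] using dist_log_im_le I z

theorem tsum_exp_neg_dist_I_netPoint_le (m : ℤ) :
    ∑' k : ℤ, ENNReal.ofReal (exp (-dist I (netPoint m k))) ≤ 68 := by
  set y := exp (m / 4)
  have hy : 0 < y := exp_pos _
  have hterm (k : ℤ) : ENNReal.ofReal (exp (-dist I (netPoint m k))) ≤
      ENNReal.ofReal (2 * y) * ENNReal.ofReal (((k * (y / 4)) ^ 2 + ((y + 1) / 2) ^ 2)⁻¹) := by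
    rw [← ENNReal.ofReal_mul (by positivity), ← div_eq_mul_inv]
    refine ENNReal.ofReal_le_ofReal ((exp_neg_dist_I_le _).trans ?_)
    simp only [netPoint_re, netPoint_im]
    refine div_le_div_of_nonneg_left (by positivity) (by positivity) ?_
    nlinarith [sq_nonneg (y - 1)]
  calc ∑' k : ℤ, ENNReal.ofReal (exp (-dist I (netPoint m k)))
      ≤ ∑' k : ℤ, ENNReal.ofReal (2 * y) *
          ENNReal.ofReal (((k * (y / 4)) ^ 2 + ((y + 1) / 2) ^ 2)⁻¹) := ENNReal.tsum_le_tsum hterm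
    _ ≤ ENNReal.ofReal (2 * y) *
          (2 * ENNReal.ofReal ((((y + 1) / 2) ^ 2)⁻¹ + 2 / (y / 4 * ((y + 1) / 2)))) := by
        rw [ENNReal.tsum_mul_left]
        gcongr
        exact tsum_int_ofReal_inv_mul_sq_add_sq_le (by positivity) (by positivity)
    _ = ENNReal.ofReal (2 * (2 * y * ((((y + 1) / 2) ^ 2)⁻¹ + 2 / (y / 4 * ((y + 1) / 2))))) := by
        rw [mul_left_comm, ← ENNReal.ofReal_mul (by positivity), ENNReal.ofReal_mul zero_le_two,
          ENNReal.ofReal_ofNat]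
    _ ≤ ENNReal.ofReal 68 := by
        refine ENNReal.ofReal_le_ofReal ?_
        have : 2 * y * ((((y + 1) / 2) ^ 2)⁻¹ + 2 / (y / 4 * ((y + 1) / 2))) =
            8 * y / (y + 1) ^ 2 + 32 / (y + 1) := by field_simp; ring
        have h₁ : 8 * y / (y + 1) ^ 2 ≤ 2 := by
          rw [div_le_iff₀ (by positivity)]; nlinarith [sq_nonneg (y - 1)]
        have h₂ : 32 / (y + 1) ≤ 32 := div_le_self (by norm_num) (by linarith)
        linarith
    _ = 68 := by norm_num

theorem tsum_exp_neg_mul_dist_I_netPoint_lt_top {s : ℝ} (hs : 1 < s) :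
    ∑' p : ℤ × ℤ, ENNReal.ofReal (exp (-s * dist I (netPoint p.1 p.2))) < ⊤ := by
  set r := ENNReal.ofReal (exp (-(s - 1) / 4))
  have hr : r < 1 := ENNReal.ofReal_lt_one.2 (exp_lt_one_iff.2 (by linarith))
  have hterm (m k : ℤ) : ENNReal.ofReal (exp (-s * dist I (netPoint m k))) ≤
      r ^ m.natAbs * ENNReal.ofReal (exp (-dist I (netPoint m k))) := by
    have hm : |(m : ℝ)| / 4 ≤ dist I (netPoint m k) := by
      simpa [abs_div] using abs_log_im_le_dist_I (netPoint m k)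
    rw [← ENNReal.ofReal_pow (exp_nonneg _), ← ENNReal.ofReal_mul (by positivity), ← exp_nat_mul,
      ← exp_add, Nat.cast_natAbs, Int.cast_abs]
    gcongr
    nlinarith [dist_nonneg (x := I) (y := netPoint m k)]
  calc ∑' p : ℤ × ℤ, ENNReal.ofReal (exp (-s * dist I (netPoint p.1 p.2)))
      ≤ ∑' m : ℤ, ∑' k : ℤ, r ^ m.natAbs * ENNReal.ofReal (exp (-dist I (netPoint m k))) := by
        rw [← ENNReal.tsum_prod]
        exact ENNReal.tsum_le_tsum fun p => hterm p.1 p.2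
    _ ≤ ∑' m : ℤ, r ^ m.natAbs * 68 := by
        refine ENNReal.tsum_le_tsum fun m => ?_
        rw [ENNReal.tsum_mul_left]
        gcongr
        exact tsum_exp_neg_dist_I_netPoint_le m
    _ ≤ 2 * (1 - r)⁻¹ * 68 := by
        rw [ENNReal.tsum_mul_right, ← ENNReal.tsum_geometric]
        gcongr
        exact ENNReal.tsum_int_comp_natAbs_le (r ^ ·)
    _ < ⊤ := by
        have : (1 - r)⁻¹ < ⊤ := ENNReal.inv_lt_top.2 (tsub_pos_of_lt hr)
        exact ENNReal.mul_lt_top (ENNReal.mul_lt_top (by simp) this) (by simp)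

theorem geodesicSet_nonempty {u v : ℝ} (h : u < v) : (geodesicSet u v).Nonempty := by
  refine ⟨⟨⟨(u + v) / 2, (v - u) / 2⟩, by simpa using h⟩, ?_⟩
  have : (⟨(u + v) / 2, (v - u) / 2⟩ : ℂ) - (((u + v) / 2 : ℝ) : ℂ) =
      ((v - u) / 2 : ℝ) * Complex.I := by
    apply Complex.ext <;> simp
  simp only [geodesicSet, mem_ofPred_eq, this, norm_mul, Complex.norm_real, Complex.norm_I,
    mul_one, Real.norm_eq_abs, abs_sub_comm u v]
  rw [abs_div, abs_two]

theorem exp_decay_integrable_of_thurston_bound_general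
    (μ : Measure (ℝ × ℝ)) (M : ℝ)
    (hThurston : ∀ z : ℍ,
      μ {g : ℝ × ℝ | g.1 < g.2 ∧ Metric.infDist z (geodesicSet g.1 g.2) ≤ 1}
        ≤ ENNReal.ofReal M)
    (lam : ℝ) (hlam : 0 < lam) :
    (∫⁻ g in {g : ℝ × ℝ | g.1 < g.2},
        ENNReal.ofReal
          (Real.exp (-(1 + lam) * Metric.infDist UpperHalfPlane.I (geodesicSet g.1 g.2)))
        ∂μ) < ⊤ := by
  set s := 1 + lam
  have hcover : ∀ g ∈ {g : ℝ × ℝ | g.1 < g.2}, ∃ p : ℤ × ℤ,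
      g ∈ {g : ℝ × ℝ | g.1 < g.2 ∧ infDist (netPoint p.1 p.2) (geodesicSet g.1 g.2) ≤ 1} ∧
      ENNReal.ofReal (exp (-s * infDist I (geodesicSet g.1 g.2))) ≤
        ENNReal.ofReal (exp s) * ENNReal.ofReal (exp (-s * dist I (netPoint p.1 p.2))) := by
    rintro g (hg : g.1 < g.2)
    obtain ⟨p, hp, hIp⟩ := exists_netPoint_infDist_le_one I (geodesicSet_nonempty hg)
    refine ⟨p, ⟨hg, hp⟩, ?_⟩
    rw [← ENNReal.ofReal_mul (exp_nonneg _), ← exp_add]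
    gcongr
    nlinarith
  refine (setLIntegral_le_tsum_mul_of_forall_exists (fun p => hThurston _) hcover).trans_lt ?_
  rw [ENNReal.tsum_mul_left]
  have := tsum_exp_neg_mul_dist_I_netPoint_lt_top (s := s) (by linarith)
  finiteness

/-- If a measure `μ` on the space of geodesics `{u < v}` has Thurston-norm type
bound `M` (the measure of geodesics passing within hyperbolic distance 1 of any
point is at most `M`), then `∫ e^{−(1+λ) d_g} dμ(g) < ∞`, where `d_g` is the
distance from the basepoint `i` to the geodesic. -/
theorem exp_decay_integrable_of_thurston_bound
    (μ : Measure (ℝ × ℝ)) (M : ℝ) (hM : 0 < M)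
    (hThurston : ∀ z : ℍ,
      μ {g : ℝ × ℝ | g.1 < g.2 ∧ Metric.infDist z (geodesicSet g.1 g.2) ≤ 1}
        ≤ ENNReal.ofReal M)
    (lam : ℝ) (hlam : 0 < lam) :
    (∫⁻ g in {g : ℝ × ℝ | g.1 < g.2},
        ENNReal.ofReal
          (Real.exp (-(1 + lam) * Metric.infDist UpperHalfPlane.I (geodesicSet g.1 g.2)))
        ∂μ) < ⊤ :=
  exp_decay_integrable_of_thurston_bound_general μ M hThurston lam hlam
end

section
/- Let u < v be real numbers, let γ(u,v) = { w ∈ ℍ : |w − (u+v)/2| = (v−u)/2 } be the hyperbolic geodesic of the upper half-plane ℍ with ideal endpoints u and v, and let D ≥ 0. If there exists a point z ∈ γ(u,v) with dist_ℍ(i, z) ≤ D, then v − u ≥ 2 e^{−D}. -/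
open UpperHalfPlane

open scoped UpperHalfPlane

namespace UpperHalfPlane

theorem exp_neg_dist_I_le_im (z : ℍ) : Real.exp (-dist I z) ≤ z.im := by
  simpa [Real.exp_neg, div_eq_inv_mul] using im_div_exp_dist_le I z

end UpperHalfPlane

theorem im_le_of_mem_geodesicSet {u v : ℝ} {z : ℍ} (hz : z ∈ geodesicSet u v) :
    z.im ≤ |u - v| / 2 := by
  calc z.im = ((z : ℂ) - (((u + v) / 2 : ℝ) : ℂ)).im := by simp
    _ ≤ ‖(z : ℂ) - (((u + v) / 2 : ℝ) : ℂ)‖ := Complex.im_le_norm _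
    _ = |u - v| / 2 := hz

theorem boundary_interval_ge_of_dist_le_general (u v : ℝ) (huv : u < v) (D : ℝ)
    (hz : ∃ z ∈ geodesicSet u v, dist UpperHalfPlane.I z ≤ D) :
    v - u ≥ 2 * Real.exp (-D) := by
  obtain ⟨z, hz, hzD⟩ := hz
  have hlen : |u - v| = v - u := by rw [abs_sub_comm, abs_of_pos (sub_pos.2 huv)]
  calc 2 * Real.exp (-D) ≤ 2 * Real.exp (-dist I z) := by gcongr
    _ ≤ 2 * z.im := by gcongr; exact exp_neg_dist_I_le_im z
    _ ≤ v - u := by linarith [im_le_of_mem_geodesicSet hz]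

/-- A geodesic of the upper half-plane passing within hyperbolic distance `D`
of the basepoint `i` subtends a boundary interval of Euclidean length at least
`2 e^{−D}`. -/
theorem boundary_interval_ge_of_dist_le (u v : ℝ) (huv : u < v) (D : ℝ) (hD : 0 ≤ D)
    (hz : ∃ z ∈ geodesicSet u v, dist UpperHalfPlane.I z ≤ D) :
    v - u ≥ 2 * Real.exp (-D) :=
  boundary_interval_ge_of_dist_le_general u v huv D hz
end
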